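/- arXiv:0908.3911 — 8 statements merged into one kernel-verified Lean document; each statement's English description precedes it below -/
import Mathlib

section
/- For any integer n ≥ 2, we have 3·⌈√(n/3)⌉ ≥ ⌈n / ⌈√(n/3)⌉⌉. -/
theorem Real.le_ceil_sqrt_sq (x : ℝ) : x ≤ (⌈√x⌉ : ℝ) ^ 2 :=
  (Real.sqrt_le_iff.mp (Int.le_ceil √x)).2

theorem Int.ceil_div_le_of_le_mul {K : Type*} [Field K] [LinearOrder K] [IsStrictOrderedRing K]
    [FloorRing K] {a : K} {c k : ℤ} (hc : 0 ≤ c) (hk : 0 ≤ k) (h : a ≤ k * c) :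
    ⌈a / c⌉ ≤ k := by
  rcases hc.eq_or_lt with rfl | hc
  · simpa using hk
  · rw [Int.ceil_le, div_le_iff₀ (by exact_mod_cast hc)]
    exact h

theorem stmt_2_general (n : ℕ) :
    ⌈(n : ℚ) / ((⌈Real.sqrt ((n : ℝ) / 3)⌉ : ℤ) : ℚ)⌉ ≤ 3 * ⌈Real.sqrt ((n : ℝ) / 3)⌉ := by
  set c : ℤ := ⌈Real.sqrt ((n : ℝ) / 3)⌉
  have hc : 0 ≤ c := Int.ceil_nonneg (Real.sqrt_nonneg _)
  have hnc : (n : ℤ) ≤ 3 * c * c := by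
    have := Real.le_ceil_sqrt_sq ((n : ℝ) / 3)
    exact_mod_cast (show (n : ℝ) ≤ 3 * c * c by linarith)
  exact Int.ceil_div_le_of_le_mul hc (by omega) (by exact_mod_cast hnc)

theorem stmt_2 (n : ℕ) (hn : 2 ≤ n) :
    ⌈(n : ℚ) / ((⌈Real.sqrt ((n : ℝ) / 3)⌉ : ℤ) : ℚ)⌉ ≤ 3 * ⌈Real.sqrt ((n : ℝ) / 3)⌉ :=
  stmt_2_general n
end

section
/- Let k ≥ 2, n = k², and let f be as in the special-case construction. For any two distinct points (x₁,y₁), (x₂,y₂) in {0,…,n−1}² with images (x₁',y₁') = f(x₁,y₁) and (x₂',y₂') = f(x₂,y₂), we have max(|x₂−x₁|, |y₂−y₁|) + max(|x₂'−x₁'|, |y₂'−y₁'|) ≥ k. -/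
/-!
In each coordinate the map is `x ↦ x + (x % k) k` up to a multiple of `k²`, so it moves every
point by a multiple of `k`. If two points and their images are both at distance less than `k`
in total, they must therefore be moved by the same amount; comparing the shifts modulo `k²`
shows that the points have the same residue modulo `k`, and being closer than `k` they coincide.
-/

lemma Int.eq_of_dvd_sub_of_abs_sub_lt {k a b : ℤ} (hd : k ∣ b - a) (h : |b - a| < k) : a = b :=
  (sub_eq_zero.mp (Int.eq_zero_of_abs_lt_dvd hd h)).symm

lemma sq_dvd_ite_sub_self (c : Prop) [Decidable c] (a k : ℤ) :
    k ^ 2 ∣ (if c then a else a - k ^ 2) - a := by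
  split_ifs <;> simp

lemma eq_of_abs_sub_add_abs_sub_lt {k x₁ x₂ g₁ g₂ : ℤ}
    (hg₁ : k ^ 2 ∣ g₁ - (x₁ + x₁ % k * k)) (hg₂ : k ^ 2 ∣ g₂ - (x₂ + x₂ % k * k))
    (h : |x₂ - x₁| + |g₂ - g₁| < k) : x₁ = x₂ := by
  have hk : 0 < k := (add_nonneg (abs_nonneg _) (abs_nonneg _)).trans_lt h
  have hk₂ : k ∣ k ^ 2 := dvd_pow_self k two_ne_zero
  have hshift : x₂ - x₁ = g₂ - g₁ := by
    refine Int.eq_of_dvd_sub_of_abs_sub_lt ?_ ((abs_sub _ _).trans_lt (by linarith))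
    rw [show g₂ - g₁ - (x₂ - x₁) = g₂ - (x₂ + x₂ % k * k) - (g₁ - (x₁ + x₁ % k * k)) +
      (x₂ % k - x₁ % k) * k by ring]
    exact ((hk₂.trans hg₂).sub (hk₂.trans hg₁)).add (dvd_mul_left k _)
  have hrem : x₁ % k = x₂ % k := by
    refine Int.eq_of_dvd_sub_of_abs_sub_lt (k := k) ?_ ?_
    · rw [← mul_dvd_mul_iff_right hk.ne', ← sq, show (x₂ % k - x₁ % k) * k =
          g₁ - (x₁ + x₁ % k * k) - (g₂ - (x₂ + x₂ % k * k)) by linear_combination -hshift]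
      exact hg₁.sub hg₂
    · have := Int.emod_nonneg x₁ hk.ne'
      have := Int.emod_nonneg x₂ hk.ne'
      have := Int.emod_lt_of_pos x₁ hk
      have := Int.emod_lt_of_pos x₂ hk
      rw [abs_sub_lt_iff]
      constructor <;> linarith
  exact Int.eq_of_dvd_sub_of_abs_sub_lt (Int.ModEq.dvd hrem) (by linarith [abs_nonneg (g₂ - g₁)])

theorem stmt_5_general (k n : ℤ)
    (f : ℤ × ℤ → ℤ × ℤ)
    (hf : ∀ x y : ℤ, f (x, y) =
      ((if x + (x % k) * k ≤ n - 1 then x + (x % k) * k else x + (x % k) * k - k ^ 2),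
       (if y + (y % k) * k ≤ n - 1 then y + (y % k) * k else y + (y % k) * k - k ^ 2)))
    (x₁ y₁ x₂ y₂ : ℤ)
    (hne : (x₁, y₁) ≠ (x₂, y₂)) :
    k ≤ max |x₂ - x₁| |y₂ - y₁| +
      max |(f (x₂, y₂)).1 - (f (x₁, y₁)).1| |(f (x₂, y₂)).2 - (f (x₁, y₁)).2| := by
  by_contra! hlt
  have hdisp : ∀ x y, k ^ 2 ∣ (f (x, y)).1 - (x + x % k * k) ∧
      k ^ 2 ∣ (f (x, y)).2 - (y + y % k * k) := fun x y => by
    rw [hf]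
    exact ⟨sq_dvd_ite_sub_self _ _ _, sq_dvd_ite_sub_self _ _ _⟩
  have hx : x₁ = x₂ := eq_of_abs_sub_add_abs_sub_lt (hdisp x₁ y₁).1 (hdisp x₂ y₂).1
    ((add_le_add (le_max_left _ _) (le_max_left _ _)).trans_lt hlt)
  have hy : y₁ = y₂ := eq_of_abs_sub_add_abs_sub_lt (hdisp x₁ y₁).2 (hdisp x₂ y₂).2
    ((add_le_add (le_max_right _ _) (le_max_right _ _)).trans_lt hlt)
  exact hne (by rw [hx, hy])

theorem stmt_5 (k n : ℤ) (hk : 2 ≤ k) (hn : n = k ^ 2)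
    (f : ℤ × ℤ → ℤ × ℤ)
    (hf : ∀ x y : ℤ, f (x, y) =
      ((if x + (x % k) * k ≤ n - 1 then x + (x % k) * k else x + (x % k) * k - k ^ 2),
       (if y + (y % k) * k ≤ n - 1 then y + (y % k) * k else y + (y % k) * k - k ^ 2)))
    (x₁ y₁ x₂ y₂ : ℤ)
    (h₁ : (x₁, y₁) ∈ Set.Icc (0 : ℤ) (n - 1) ×ˢ Set.Icc (0 : ℤ) (n - 1))
    (h₂ : (x₂, y₂) ∈ Set.Icc (0 : ℤ) (n - 1) ×ˢ Set.Icc (0 : ℤ) (n - 1))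
    (hne : (x₁, y₁) ≠ (x₂, y₂)) :
    k ≤ max |x₂ - x₁| |y₂ - y₁| +
      max |(f (x₂, y₂)).1 - (f (x₁, y₁)).1| |(f (x₂, y₂)).2 - (f (x₁, y₁)).2| :=
  stmt_5_general k n f hf x₁ y₁ x₂ y₂ hne
end

section
/- Let k ≥ 1 be an integer and let x₁, x₂, i₁, i₂ be integers with 0 ≤ i₁, i₂ ≤ k−1 and i₁ ≠ i₂. Suppose x₁' ∈ {x₁ + i₁k, x₁ + i₁k − k²} and x₂' ∈ {x₂ + i₂k, x₂ + i₂k − k²}. Then |x₂ − x₁| + |x₂' − x₁'| ≥ k. -/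
/-!
Each shift `xᵢ ↦ xᵢ'` adds `jᵢ * k` with `jᵢ ∈ {iᵢ, iᵢ - k}`, so `x₂' - x₁' = (x₂ - x₁) + m * k`
with `m = j₂ - j₁`. Since `0 < |i₂ - i₁| < k`, the integer `m` is nonzero, and the triangle
inequality gives `k ≤ |m * k| ≤ |x₂ - x₁| + |x₂' - x₁'|`.
-/

lemma le_abs_add_abs_add_mul {k m : ℤ} (a : ℤ) (hk : 0 ≤ k) (hm : m ≠ 0) :
    k ≤ |a| + |a + m * k| :=
  calc k ≤ |m| * k := le_mul_of_one_le_left hk (Int.one_le_abs hm)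
    _ = |(a + m * k) - a| := by rw [add_sub_cancel_left, abs_mul, abs_of_nonneg hk]
    _ ≤ |a| + |a + m * k| := by rw [add_comm |a|]; exact abs_sub _ _

lemma exists_eq_add_mul_of_shift {k x i x' : ℤ} (h : x' = x + i * k ∨ x' = x + i * k - k ^ 2) :
    ∃ j, (j = i ∨ j = i - k) ∧ x' = x + j * k := by
  rcases h with rfl | rfl
  · exact ⟨i, .inl rfl, rfl⟩
  · exact ⟨i - k, .inr rfl, by ring⟩

theorem stmt_6_general (k x₁ x₂ i₁ i₂ x₁' x₂' : ℤ)
    (hi₁ : 0 ≤ i₁ ∧ i₁ ≤ k - 1) (hi₂ : 0 ≤ i₂ ∧ i₂ ≤ k - 1) (hne : i₁ ≠ i₂)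
    (h₁ : x₁' = x₁ + i₁ * k ∨ x₁' = x₁ + i₁ * k - k ^ 2)
    (h₂ : x₂' = x₂ + i₂ * k ∨ x₂' = x₂ + i₂ * k - k ^ 2) :
    k ≤ |x₂ - x₁| + |x₂' - x₁'| := by
  obtain ⟨j₁, hj₁, rfl⟩ := exists_eq_add_mul_of_shift h₁
  obtain ⟨j₂, hj₂, rfl⟩ := exists_eq_add_mul_of_shift h₂
  have hj : j₂ - j₁ ≠ 0 := by omega
  have hdiff : x₂ + j₂ * k - (x₁ + j₁ * k) = (x₂ - x₁) + (j₂ - j₁) * k := by ring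
  rw [hdiff]
  exact le_abs_add_abs_add_mul _ (by omega) hj

theorem stmt_6 (k x₁ x₂ i₁ i₂ x₁' x₂' : ℤ) (hk : 1 ≤ k)
    (hi₁ : 0 ≤ i₁ ∧ i₁ ≤ k - 1) (hi₂ : 0 ≤ i₂ ∧ i₂ ≤ k - 1) (hne : i₁ ≠ i₂)
    (h₁ : x₁' = x₁ + i₁ * k ∨ x₁' = x₁ + i₁ * k - k ^ 2)
    (h₂ : x₂' = x₂ + i₂ * k ∨ x₂' = x₂ + i₂ * k - k ^ 2) :
    k ≤ |x₂ - x₁| + |x₂' - x₁'| :=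
  stmt_6_general k x₁ x₂ i₁ i₂ x₁' x₂' hi₁ hi₂ hne h₁ h₂
end

section
/- Let k ≥ 1 and m ≥ 3k be integers, and let x₁, x₂, i₁, i₂ be integers with 0 ≤ i₁, i₂ ≤ k−1 and i₁ ≠ i₂. Suppose x₁' ∈ {x₁ + 3i₁k, x₁ + 3i₁k − mk, x₁ + 3i₁k − mk + k} and x₂' ∈ {x₂ + 3i₂k, x₂ + 3i₂k − mk, x₂ + 3i₂k − mk + k}. Then |x₂ − x₁| + |x₂' − x₁'| ≥ 2k. -/
/-!
Each primed point is the unprimed one moved by `(3 i - c) k` with `c ∈ {0, m, m - 1}`, so the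
two displacements `x₂ - x₁` and `x₂' - x₁'` differ by `n k` with `n = 3 (i₂ - i₁) - (c₂ - c₁)`.
Since `0 < |i₂ - i₁| < k`, the term `3 (i₂ - i₁)` has absolute value in `[3, 3k - 3]`, while
`|c₂ - c₁|` is either at most `1` or at least `m - 1 ≥ 3k - 1`; either way `|n| ≥ 2`, and the
triangle inequality gives `|x₂ - x₁| + |x₂' - x₁'| ≥ |n| k ≥ 2k`.
-/

lemma two_mul_le_abs_add_abs_of_sub_eq_mul {a b n k : ℤ} (hk : 0 ≤ k) (hn : 2 ≤ |n|)
    (h : b - a = n * k) : 2 * k ≤ |a| + |b| :=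
  calc 2 * k ≤ |n| * k := mul_le_mul_of_nonneg_right hn hk
    _ = |b - a| := by rw [h, abs_mul, abs_of_nonneg hk]
    _ ≤ |a| + |b| := by simpa [add_comm] using abs_sub b a

lemma exists_shift_coeff {k m x i x' : ℤ}
    (h : x' = x + 3 * i * k ∨ x' = x + 3 * i * k - m * k ∨ x' = x + 3 * i * k - m * k + k) :
    ∃ c, (c = 0 ∨ c = m ∨ c = m - 1) ∧ x' = x + (3 * i - c) * k := by
  rcases h with rfl | rfl | rfl
  · exact ⟨0, by simp, by ring⟩
  · exact ⟨m, by simp, by ring⟩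
  · exact ⟨m - 1, by simp, by ring⟩

lemma abs_sub_le_one_or_le_abs_sub {m c₁ c₂ : ℤ} (hc₁ : c₁ = 0 ∨ c₁ = m ∨ c₁ = m - 1)
    (hc₂ : c₂ = 0 ∨ c₂ = m ∨ c₂ = m - 1) :
    |c₂ - c₁| ≤ 1 ∨ m - 1 ≤ |c₂ - c₁| := by
  rcases hc₁ with rfl | rfl | rfl <;> rcases hc₂ with rfl | rfl | rfl <;>
    simp only [abs_le, le_abs] <;> omega

lemma two_le_abs_three_mul_sub {k m d e : ℤ} (hm : 3 * k ≤ m) (hd₀ : d ≠ 0) (hd : |d| ≤ k - 1)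
    (he : |e| ≤ 1 ∨ m - 1 ≤ |e|) : 2 ≤ |3 * d - e| := by
  have h3d : |3 * d| = 3 * |d| := by rw [abs_mul]; norm_num
  have hd₁ : 1 ≤ |d| := Int.one_le_abs hd₀
  rcases he with he | he
  · linarith [abs_sub_abs_le_abs_sub (3 * d) e]
  · linarith [abs_sub_abs_le_abs_sub e (3 * d), abs_sub_comm (3 * d) e]

theorem stmt_7 (k m x₁ x₂ i₁ i₂ x₁' x₂' : ℤ) (hk : 1 ≤ k) (hm : 3 * k ≤ m)
    (hi₁ : 0 ≤ i₁ ∧ i₁ ≤ k - 1) (hi₂ : 0 ≤ i₂ ∧ i₂ ≤ k - 1) (hne : i₁ ≠ i₂)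
    (h₁ : x₁' = x₁ + 3 * i₁ * k ∨ x₁' = x₁ + 3 * i₁ * k - m * k ∨
      x₁' = x₁ + 3 * i₁ * k - m * k + k)
    (h₂ : x₂' = x₂ + 3 * i₂ * k ∨ x₂' = x₂ + 3 * i₂ * k - m * k ∨
      x₂' = x₂ + 3 * i₂ * k - m * k + k) :
    2 * k ≤ |x₂ - x₁| + |x₂' - x₁'| := by
  obtain ⟨c₁, hc₁, rfl⟩ := exists_shift_coeff h₁
  obtain ⟨c₂, hc₂, rfl⟩ := exists_shift_coeff h₂
  have hd : |i₂ - i₁| ≤ k - 1 := abs_sub_le_iff.mpr ⟨by omega, by omega⟩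
  have hn : 2 ≤ |3 * (i₂ - i₁) - (c₂ - c₁)| :=
    two_le_abs_three_mul_sub hm (sub_ne_zero.mpr hne.symm) hd
      (abs_sub_le_one_or_le_abs_sub hc₁ hc₂)
  exact two_mul_le_abs_add_abs_of_sub_eq_mul (by omega) hn (by ring)
end

section
/- Let n ≥ 2, let k be a positive integer with 3k ≤ ⌈n/k⌉, and define g : {0,…,n−1} → ℤ by g(x) = x + 3ik if x + 3ik ≤ n−1; g(x) = x + 3ik − ⌈n/k⌉k if x + 3ik > n−1 and i ≤ (n−1) mod k; and g(x) = x + 3ik − ⌈n/k⌉k + k if x + 3ik > n−1 and i > (n−1) mod k, where i = x mod k. Then g maps {0,…,n−1} bijectively to {0,…,n−1}. -/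
set_option maxHeartbeats 1000000

private lemma stmt9_aux_le {k a b i r : ℤ} (hk : 0 < k) (hi0 : 0 ≤ i) (hrk : r < k)
    (h : k * a + i ≤ k * b + r) : a ≤ b := by
  by_contra hc
  push_neg at hc
  have h2 : k * (b + 1) ≤ k * a := mul_le_mul_of_nonneg_left (by omega) hk.le
  linarith

private lemma stmt9_aux_lt {k a b i r : ℤ} (hk : 0 < k) (hr0 : 0 ≤ r) (hir : r < i)
    (h : k * a + i ≤ k * b + r) : a < b := by
  by_contra hc
  push_neg at hc
  have h2 : k * b ≤ k * a := mul_le_mul_of_nonneg_left hc hk.le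
  linarith

theorem stmt_9 (n k : ℤ) (hn : 2 ≤ n) (hk : 0 < k)
    (hck : 3 * k ≤ ⌈(n : ℚ) / (k : ℚ)⌉)
    (g : ℤ → ℤ)
    (hg : ∀ x : ℤ, g x =
      if x + 3 * (x % k) * k ≤ n - 1 then x + 3 * (x % k) * k
      else if x % k ≤ (n - 1) % k then x + 3 * (x % k) * k - ⌈(n : ℚ) / (k : ℚ)⌉ * k
      else x + 3 * (x % k) * k - ⌈(n : ℚ) / (k : ℚ)⌉ * k + k) :
    Set.BijOn g (Set.Icc 0 (n - 1)) (Set.Icc 0 (n - 1)) := by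
  have hkQ : (0:ℚ) < (k:ℚ) := by exact_mod_cast hk
  set m : ℤ := ⌈(n : ℚ) / (k : ℚ)⌉ with hmdef
  have hceil1 : (n:ℚ) / k ≤ (m:ℚ) := Int.le_ceil _
  have hceil2 : (m:ℚ) < (n:ℚ)/k + 1 := Int.ceil_lt_add_one _
  have hnm : n ≤ m * k := by
    have h : (n:ℚ) ≤ (m:ℚ) * k := by
      rw [div_le_iff₀ hkQ] at hceil1; exact hceil1
    exact_mod_cast h
  have hmn : m * k < n + k := by
    have h : (m:ℚ) * k < (n:ℚ) + k := by
      have h2 := mul_lt_mul_of_pos_right hceil2 hkQ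
      rwa [add_mul, div_mul_cancel₀ _ hkQ.ne', one_mul] at h2
    exact_mod_cast h
  set Q : ℤ := (n-1) / k with hQdef
  set r : ℤ := (n-1) % k with hrdef
  have hdecomp : n - 1 = k * Q + r := (Int.mul_ediv_add_emod (n-1) k).symm
  have hr0 : 0 ≤ r := Int.emod_nonneg _ hk.ne'
  have hrk : r < k := Int.emod_lt_of_pos _ hk
  have hmQ : m = Q + 1 := by
    have h1 : Q < m := by
      have h : k * Q < k * m := by linarith
      exact lt_of_mul_lt_mul_left h hk.le
    have h2 : m < Q + 2 := by
      have h : k * m < k * (Q + 2) := by linarith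
      exact lt_of_mul_lt_mul_left h hk.le
    omega
  have hckQ : 3 * k ≤ Q + 1 := hmQ ▸ hck
  have hmk : m * k = Q * k + k := by rw [hmQ]; ring
  -- MapsTo
  have hmaps : Set.MapsTo g (Set.Icc 0 (n-1)) (Set.Icc 0 (n-1)) := by
    intro x hx
    simp only [Set.mem_Icc] at hx ⊢
    obtain ⟨hx0, hx1⟩ := hx
    set i := x % k with hidef
    set q := x / k with hqdef
    have hxd : x = k * q + i := (Int.mul_ediv_add_emod x k).symm
    have hi0 : 0 ≤ i := Int.emod_nonneg _ hk.ne'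
    have hik : i < k := Int.emod_lt_of_pos _ hk
    have hq0 : 0 ≤ q := by
      by_contra hc; push_neg at hc
      have h : k * q ≤ k * (-1) := mul_le_mul_of_nonneg_left (by omega) hk.le
      linarith
    have hqQ : q ≤ Q := stmt9_aux_le hk hi0 hrk (by linarith)
    have h3i : 3 * i ≤ Q - 2 := by omega
    rw [hg]
    split_ifs with h1 h2
    · refine ⟨?_, h1⟩
      have := mul_nonneg hi0 hk.le
      linarith
    · push_neg at h1
      have hge : Q + 1 ≤ q + 3 * i := by
        by_contra hc; push_neg at hc
        have h : k * (q + 3*i) ≤ k * Q := mul_le_mul_of_nonneg_left (by omega) hk.le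
        linarith
      constructor
      · have h : k * (Q+1) ≤ k * (q + 3*i) := mul_le_mul_of_nonneg_left hge hk.le
        linarith
      · have h : k * (q + 3*i) ≤ k * (Q + (Q-2)) := mul_le_mul_of_nonneg_left (by omega) hk.le
        linarith
    · push_neg at h1 h2
      have hqQ' : q ≤ Q - 1 := by
        have := stmt9_aux_lt hk hr0 h2 (show k*q + i ≤ k*Q + r by linarith)
        omega
      have hge : Q ≤ q + 3 * i := by
        by_contra hc; push_neg at hc
        have h : k * (q + 3*i) ≤ k * (Q-1) := mul_le_mul_of_nonneg_left (by omega) hk.le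
        linarith
      constructor
      · have h : k * Q ≤ k * (q + 3*i) := mul_le_mul_of_nonneg_left hge hk.le
        linarith
      · have h : k * (q + 3*i) ≤ k * ((Q-1) + (Q-2)) := mul_le_mul_of_nonneg_left (by omega) hk.le
        linarith
  -- InjOn
  have hinj : Set.InjOn g (Set.Icc 0 (n-1)) := by
    intro x hx y hy heq
    simp only [Set.mem_Icc] at hx hy
    obtain ⟨hx0, hx1⟩ := hx
    obtain ⟨hy0, hy1⟩ := hy
    have hmod : ∀ z : ℤ, g z % k = z % k := by
      intro z
      rw [hg]
      split_ifs with h1 h2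
      · rw [mul_comm (3 * (z % k)) k, Int.add_mul_emod_self_left]
      · have h : z + 3 * (z % k) * k - m * k = z + k * (3 * (z % k) - m) := by ring
        rw [h, Int.add_mul_emod_self_left]
      · have h : z + 3 * (z % k) * k - m * k + k = z + k * (3 * (z % k) - m + 1) := by ring
        rw [h, Int.add_mul_emod_self_left]
    have hxy : x % k = y % k := by rw [← hmod x, ← hmod y, heq]
    set i := x % k with hidef
    set q := x / k with hqdef
    set p := y / k with hpdef
    have hxd : x = k * q + i := (Int.mul_ediv_add_emod x k).symm
    have hyd : y = k * p + i := by
      have := (Int.mul_ediv_add_emod y k).symm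
      rw [← hxy] at this
      exact this
    have hi0 : 0 ≤ i := Int.emod_nonneg _ hk.ne'
    have hik : i < k := Int.emod_lt_of_pos _ hk
    have hq0 : 0 ≤ q := by
      by_contra hc; push_neg at hc
      have h : k * q ≤ k * (-1) := mul_le_mul_of_nonneg_left (by omega) hk.le
      linarith
    have hqQ : q ≤ Q := stmt9_aux_le hk hi0 hrk (by linarith)
    have hp0 : 0 ≤ p := by
      by_contra hc; push_neg at hc
      have h : k * p ≤ k * (-1) := mul_le_mul_of_nonneg_left (by omega) hk.le
      linarith
    have hpQ : p ≤ Q := stmt9_aux_le hk hi0 hrk (by linarith)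
    rw [hg x, hg y, ← hxy, ← hidef] at heq
    rw [hxd, hyd, hmQ] at heq
    rw [hxd, hyd]
    split_ifs at heq with h1 h2 h3 h4 h5 h6
    · -- both first branch
      have hkey : k * q = k * p := by linear_combination heq
      have := mul_left_cancel₀ hk.ne' hkey
      rw [this]
    · -- x first, y second (i ≤ r)
      have hkey : k * q = k * (p - Q - 1) := by linear_combination heq
      have := mul_left_cancel₀ hk.ne' hkey
      omega
    · -- x first, y third (r < i)
      push_neg at h3
      have hpQ' : p < Q := stmt9_aux_lt hk hr0 h3 (by linarith)
      have hkey : k * q = k * (p - Q) := by linear_combination heq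
      have := mul_left_cancel₀ hk.ne' hkey
      omega
    · -- x second, y first
      have hkey : k * (q - Q - 1) = k * p := by linear_combination heq
      have := mul_left_cancel₀ hk.ne' hkey
      omega
    · -- both second
      have hkey : k * q = k * p := by linear_combination heq
      have := mul_left_cancel₀ hk.ne' hkey
      rw [this]
    · -- x third, y first
      have hnb : ¬ (i ≤ r) := by assumption
      push_neg at hnb
      have hqQ' : q < Q := stmt9_aux_lt hk hr0 hnb (by linarith)
      have hkey : k * (q - Q) = k * p := by linear_combination heq
      have := mul_left_cancel₀ hk.ne' hkey
      omega
    · -- both third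
      have hkey : k * q = k * p := by linear_combination heq
      have := mul_left_cancel₀ hk.ne' hkey
      rw [this]
  exact ((Set.finite_Icc 0 (n-1)).injOn_iff_bijOn_of_mapsTo hmaps).mp hinj
end

section
/- For every integer n ≥ 2 there exists a bijection f of the grid {0,…,n−1}² to itself such that for all distinct points p, q in the grid, the L∞ distance between p and q plus the L∞ distance between f(p) and f(q) is at least 2·⌊√(n/3)⌋. -/
/-!
Let `k = ⌊√(n/3)⌋`, `m = 2k + 1`, and let `T (x, y) = (y, x + m y mod n)`; take `f = T ∘ T`.
A difference `(s, t)` of two grid points goes to a difference `(u, v)` of their images with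
`u ≡ s + m t` and `v ≡ t + m u (mod n)`. If the two sup norms summed to less than `2k`, the defects
`s + m t - u` and `t + m u - v` would be multiples of `n` of total size below `2n`, so one of them
vanishes. An exact identity `b = a + m c` with `|a| + |b| < m` forces `c = 0`; this makes the other
defect smaller than `n`, hence zero as well, and then `s = t = 0`.
-/

lemma Int.eq_zero_or_eq_zero_of_dvd_of_abs_add_abs_lt {n x y : ℤ} (hx : n ∣ x) (hy : n ∣ y)
    (h : |x| + |y| < 2 * n) : x = 0 ∨ y = 0 := by
  by_contra! hxy
  have := Int.le_of_dvd (abs_pos.2 hxy.1) ((dvd_abs n x).2 hx)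
  have := Int.le_of_dvd (abs_pos.2 hxy.2) ((dvd_abs n y).2 hy)
  omega

lemma Int.eq_zero_of_eq_add_mul {m a b c : ℤ} (h : b = a + m * c) (hab : |a| + |b| < m) :
    c = 0 := by
  have hm : m ≠ 0 := by have := abs_nonneg a; have := abs_nonneg b; omega
  have hmc : m * c = 0 := Int.eq_zero_of_abs_lt_dvd (dvd_mul_right m c) <| by
    calc |m * c| = |b - a| := by rw [h, add_sub_cancel_left]
      _ ≤ |a| + |b| := by rw [add_comm]; exact abs_sub _ _
      _ < m := hab
  exact (mul_eq_zero.1 hmc).resolve_left hm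

lemma abs_add_mul_sub_le {α : Type*} [Ring α] [LinearOrder α] [IsOrderedRing α]
    (a b c : α) {m : α} (hm : 0 ≤ m) : |a + m * c - b| ≤ |a| + m * |c| + |b| := by
  grw [abs_sub, abs_add_le, abs_mul, abs_of_nonneg hm]

lemma abs_two_mul_add_one_mul_add_lt {n k a b : ℤ} (hn : 3 * k ^ 2 ≤ n)
    (hab : |a| + |b| ≤ 2 * k - 1) (ha : 2 * |a| ≤ 2 * k - 1) : |(2 * k + 1) * a + b| < n := by
  have hak : |a| ≤ k - 1 := by omega
  have hk : 1 ≤ k := by have := abs_nonneg a; omega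
  calc |(2 * k + 1) * a + b| ≤ (2 * k + 1) * |a| + |b| := by
        grw [abs_add_le, abs_mul, abs_of_pos (by omega : 0 < 2 * k + 1)]
    _ < n := by nlinarith

theorem two_mul_le_max_abs_add_max_abs {n k s t u v : ℤ} (hn : 3 * k ^ 2 ≤ n)
    (hst : (s, t) ≠ 0) (hu : u ≡ s + (2 * k + 1) * t [ZMOD n])
    (hv : v ≡ t + (2 * k + 1) * u [ZMOD n]) :
    2 * k ≤ max |s| |t| + max |u| |v| := by
  by_contra! hlt
  have hsu : |s| + |u| ≤ 2 * k - 1 := by grind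
  have hsv : |s| + |v| ≤ 2 * k - 1 := by grind
  have htu : |t| + |u| ≤ 2 * k - 1 := by grind
  have htv : |t| + |v| ≤ 2 * k - 1 := by grind
  have hk : 1 ≤ k := by have := abs_nonneg s; have := abs_nonneg u; omega
  have hXle := abs_add_mul_sub_le s u t (m := 2 * k + 1) (by omega)
  have hYle := abs_add_mul_sub_le t v u (m := 2 * k + 1) (by omega)
  have hX0 (h : s + (2 * k + 1) * t - u = 0) : t = 0 ∧ u = s := by
    have ht := Int.eq_zero_of_eq_add_mul (by linarith : u = s + (2 * k + 1) * t) (by omega)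
    exact ⟨ht, by subst ht; linarith⟩
  have hY0 (h : t + (2 * k + 1) * u - v = 0) : u = 0 ∧ v = t := by
    have hu := Int.eq_zero_of_eq_add_mul (by linarith : v = t + (2 * k + 1) * u) (by omega)
    exact ⟨hu, by subst hu; linarith⟩
  have hXY : s + (2 * k + 1) * t - u = 0 ∧ t + (2 * k + 1) * u - v = 0 := by
    rcases Int.eq_zero_or_eq_zero_of_dvd_of_abs_add_abs_lt hu.dvd hv.dvd
      (by nlinarith [abs_nonneg t, abs_nonneg u]) with h | h
    · refine ⟨h, Int.eq_zero_of_abs_lt_dvd hv.dvd ?_⟩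
      obtain ⟨rfl, rfl⟩ := hX0 h
      simpa [sub_eq_add_neg] using
        abs_two_mul_add_one_mul_add_lt (b := -v) hn (by simpa using hsv) (by omega)
    · refine ⟨Int.eq_zero_of_abs_lt_dvd hu.dvd ?_, h⟩
      obtain ⟨rfl, rfl⟩ := hY0 h
      simpa [add_comm] using
        abs_two_mul_add_one_mul_add_lt (a := v) (b := s) hn (by omega) (by omega)
  obtain ⟨rfl, rfl⟩ := hX0 hXY.1
  obtain ⟨rfl, -⟩ := hY0 hXY.2
  exact hst rfl

lemma three_mul_sq_floor_sqrt_le {n : ℤ} (hn : 0 ≤ n) : 3 * ⌊√((n : ℝ) / 3)⌋ ^ 2 ≤ n := by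
  have hk : (0 : ℝ) ≤ ⌊√((n : ℝ) / 3)⌋ := by
    exact_mod_cast Int.floor_nonneg.2 (Real.sqrt_nonneg _)
  have := (Real.le_sqrt hk (by positivity)).1 (Int.floor_le _)
  exact_mod_cast (by linarith : (3 : ℝ) * ⌊√((n : ℝ) / 3)⌋ ^ 2 ≤ n)

def grid (n : ℤ) : Set (ℤ × ℤ) := Set.Icc 0 (n - 1) ×ˢ Set.Icc 0 (n - 1)

lemma pos_of_mem_grid {n : ℤ} {p : ℤ × ℤ} (hp : p ∈ grid n) : 0 < n := by
  have := hp.1.1; have := hp.1.2; omega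

lemma emod_mem_Icc {n : ℤ} (hn : 0 < n) (a : ℤ) : a % n ∈ Set.Icc 0 (n - 1) :=
  ⟨Int.emod_nonneg a hn.ne', by have := Int.emod_lt_of_pos a hn; omega⟩

lemma emod_eq_self_of_mem_Icc {n a : ℤ} (ha : a ∈ Set.Icc 0 (n - 1)) : a % n = a :=
  Int.emod_eq_of_lt ha.1 (by linarith [ha.2])

def stepMod (n m : ℤ) (p : ℤ × ℤ) : ℤ × ℤ := (p.2, (p.1 + m * p.2) % n)

lemma bijOn_stepMod (n m : ℤ) : Set.BijOn (stepMod n m) (grid n) (grid n) := by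
  refine Set.InvOn.bijOn (f' := fun p => ((p.2 - m * p.1) % n, p.1))
    ⟨fun p hp => ?_, fun p hp => ?_⟩
    (fun p hp => ⟨hp.2, emod_mem_Icc (pos_of_mem_grid hp) _⟩)
    (fun p hp => ⟨emod_mem_Icc (pos_of_mem_grid hp) _, hp.1⟩)
  · dsimp only [stepMod]
    rw [Int.emod_sub_emod, add_sub_cancel_right, emod_eq_self_of_mem_Icc hp.1]
  · dsimp only [stepMod]
    rw [Int.emod_add_emod, sub_add_cancel, emod_eq_self_of_mem_Icc hp.2]

lemma stepMod_sub_modEq (n m : ℤ) (p q : ℤ × ℤ) :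
    (stepMod n m q).2 - (stepMod n m p).2 ≡ (q.1 - p.1) + m * (q.2 - p.2) [ZMOD n] := by
  have := (Int.mod_modEq (q.1 + m * q.2) n).sub (Int.mod_modEq (p.1 + m * p.2) n)
  rw [stepMod, stepMod]
  convert this using 1
  ring

theorem stmt_11_general (n : ℤ) :
    ∃ f : ℤ × ℤ → ℤ × ℤ,
      Set.BijOn f (Set.Icc 0 (n - 1) ×ˢ Set.Icc 0 (n - 1))
        (Set.Icc 0 (n - 1) ×ˢ Set.Icc 0 (n - 1)) ∧
      ∀ p ∈ Set.Icc (0 : ℤ) (n - 1) ×ˢ Set.Icc (0 : ℤ) (n - 1),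
        ∀ q ∈ Set.Icc (0 : ℤ) (n - 1) ×ˢ Set.Icc (0 : ℤ) (n - 1), p ≠ q →
          2 * ⌊Real.sqrt ((n : ℝ) / 3)⌋ ≤
            max |q.1 - p.1| |q.2 - p.2| + max |(f q).1 - (f p).1| |(f q).2 - (f p).2| := by
  set k := ⌊Real.sqrt ((n : ℝ) / 3)⌋
  set T := stepMod n (2 * k + 1)
  refine ⟨T ∘ T, (bijOn_stepMod n _).comp (bijOn_stepMod n _), fun p hp q _ hpq => ?_⟩
  have hk := three_mul_sq_floor_sqrt_le (pos_of_mem_grid hp).le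
  have hqp : (q.1 - p.1, q.2 - p.2) ≠ 0 := by
    simpa [Prod.ext_iff, sub_eq_zero, eq_comm] using hpq
  exact two_mul_le_max_abs_add_max_abs hk hqp (stepMod_sub_modEq _ _ p q)
    (stepMod_sub_modEq _ _ (T p) (T q))

theorem stmt_11 (n : ℤ) (hn : 2 ≤ n) :
    ∃ f : ℤ × ℤ → ℤ × ℤ,
      Set.BijOn f (Set.Icc 0 (n - 1) ×ˢ Set.Icc 0 (n - 1))
        (Set.Icc 0 (n - 1) ×ˢ Set.Icc 0 (n - 1)) ∧
      ∀ p ∈ Set.Icc (0 : ℤ) (n - 1) ×ˢ Set.Icc (0 : ℤ) (n - 1),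
        ∀ q ∈ Set.Icc (0 : ℤ) (n - 1) ×ˢ Set.Icc (0 : ℤ) (n - 1), p ≠ q →
          2 * ⌊Real.sqrt ((n : ℝ) / 3)⌋ ≤
            max |q.1 - p.1| |q.2 - p.2| + max |(f q).1 - (f p).1| |(f q).2 - (f p).2| :=
  stmt_11_general n
end

section
/- For every integer n ≥ 2 and every bijection f of the grid {0,…,n−1}² to itself, there exist two distinct points p, q in the grid such that the L∞ distance between p and q plus the L∞ distance between f(p) and f(q) is at most ⌈√(n−1)⌉ + ⌊√(n−1)⌋. -/
theorem stmt_12 (n : ℤ) (hn : 2 ≤ n) (f : ℤ × ℤ → ℤ × ℤ)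
    (hf : Set.BijOn f (Set.Icc 0 (n - 1) ×ˢ Set.Icc 0 (n - 1))
      (Set.Icc 0 (n - 1) ×ˢ Set.Icc 0 (n - 1))) :
    ∃ p ∈ Set.Icc (0 : ℤ) (n - 1) ×ˢ Set.Icc (0 : ℤ) (n - 1),
      ∃ q ∈ Set.Icc (0 : ℤ) (n - 1) ×ˢ Set.Icc (0 : ℤ) (n - 1), p ≠ q ∧
        max |q.1 - p.1| |q.2 - p.2| + max |(f q).1 - (f p).1| |(f q).2 - (f p).2| ≤
          ⌈Real.sqrt ((n : ℝ) - 1)⌉ + ⌊Real.sqrt ((n : ℝ) - 1)⌋ := by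
  by_contra hcon
  push_neg at hcon
  set s : ℝ := Real.sqrt ((n : ℝ) - 1) with hs
  set a : ℤ := ⌈s⌉ with ha
  set b : ℤ := ⌊s⌋ with hb
  have hn1 : (1 : ℝ) ≤ (n : ℝ) - 1 := by
    have : (2 : ℝ) ≤ (n : ℝ) := by exact_mod_cast hn
    linarith
  have hs1 : (1 : ℝ) ≤ s := by
    have h := Real.sqrt_le_sqrt hn1
    rwa [Real.sqrt_one] at h
  have hsq : s ^ 2 = (n : ℝ) - 1 := Real.sq_sqrt (by linarith)
  have hb1 : (1 : ℤ) ≤ b := by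
    rw [hb]
    exact Int.le_floor.mpr (by exact_mod_cast hs1)
  have hba : b ≤ a := Int.floor_le_ceil s
  have hab : a ≤ b + 1 := Int.ceil_le_floor_add_one s
  have hbr : (b : ℝ) ≤ s := Int.floor_le s
  have har : s ≤ (a : ℝ) := Int.le_ceil s
  have hbr1 : s < (b : ℝ) + 1 := Int.lt_floor_add_one s
  have hb2 : b ^ 2 ≤ n - 1 := by
    have h0 : (0:ℝ) ≤ (b:ℝ) := by exact_mod_cast (by omega : (0:ℤ) ≤ b)
    have h : (b:ℝ)^2 ≤ (n:ℝ) - 1 := by nlinarith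
    exact_mod_cast h
  have ha2 : n - 1 ≤ a ^ 2 := by
    have h0 : (0:ℝ) ≤ s := by linarith
    have h : (n:ℝ) - 1 ≤ (a:ℝ)^2 := by nlinarith
    exact_mod_cast h
  have hbn : n - 1 < (b + 1) ^ 2 := by
    have h0 : (0:ℝ) ≤ s := by linarith
    have h : (n:ℝ) - 1 < ((b:ℝ) + 1)^2 := by nlinarith
    exact_mod_cast h
  have han : a ≤ n - 1 := by
    rw [ha]
    have : s ≤ ((n - 1 : ℤ) : ℝ) := by push_cast; nlinarith
    exact Int.ceil_le.mpr this
  have hD : (0:ℤ) < b + 1 := by omega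
  set M : ℤ := (n - 1) / (b + 1) with hM
  have hM0 : 0 ≤ M := Int.ediv_nonneg (by omega) (by omega)
  set T : Finset (ℤ × ℤ) := Finset.Icc (0:ℤ) a ×ˢ Finset.Icc (0:ℤ) b with hT
  set U : Finset (ℤ × ℤ) := Finset.Icc (0:ℤ) M ×ˢ Finset.Icc (0:ℤ) M with hU
  have hTS : ∀ p ∈ T, p ∈ Set.Icc (0:ℤ) (n-1) ×ˢ Set.Icc (0:ℤ) (n-1) := by
    intro p hp
    simp only [hT, Finset.mem_product, Finset.mem_Icc] at hp
    rw [Set.mem_prod]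
    simp only [Set.mem_Icc]
    omega
  have cell : ∀ x y : ℤ, x / (b+1) = y / (b+1) → |x - y| ≤ b := by
    intro x y h
    have hx := Int.mul_ediv_add_emod x (b+1)
    have hy := Int.mul_ediv_add_emod y (b+1)
    have hx1 := Int.emod_nonneg x (show b+1 ≠ 0 by omega)
    have hx2 := Int.emod_lt_of_pos x hD
    have hy1 := Int.emod_nonneg y (show b+1 ≠ 0 by omega)
    have hy2 := Int.emod_lt_of_pos y hD
    rw [h] at hx
    rw [abs_le]
    constructor <;> linarith
  have hinj : Set.InjOn (fun p => ((f p).1 / (b+1), (f p).2 / (b+1))) ↑T := by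
    intro p hp q hq hpq
    by_contra hne
    have hpS := hTS p (Finset.mem_coe.mp hp)
    have hqS := hTS q (Finset.mem_coe.mp hq)
    have hlt := hcon p hpS q hqS hne
    have hp' : p ∈ T := Finset.mem_coe.mp hp
    have hq' : q ∈ T := Finset.mem_coe.mp hq
    simp only [hT, Finset.mem_product, Finset.mem_Icc] at hp' hq'
    have h1 : |q.1 - p.1| ≤ a := abs_le.mpr ⟨by omega, by omega⟩
    have h2 : |q.2 - p.2| ≤ a := abs_le.mpr ⟨by omega, by omega⟩
    have hd : max |q.1 - p.1| |q.2 - p.2| ≤ a := max_le h1 h2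
    simp only [Prod.mk.injEq] at hpq
    obtain ⟨e1, e2⟩ := hpq
    have c1 : |(f q).1 - (f p).1| ≤ b := cell _ _ e1.symm
    have c2 : |(f q).2 - (f p).2| ≤ b := cell _ _ e2.symm
    have hd' : max |(f q).1 - (f p).1| |(f q).2 - (f p).2| ≤ b := max_le c1 c2
    omega
  have hmaps : ∀ p ∈ T, ((f p).1 / (b+1), (f p).2 / (b+1)) ∈ U := by
    intro p hp
    have hpS := hTS p hp
    have hfS := hf.mapsTo hpS
    rw [Set.mem_prod] at hfS
    simp only [Set.mem_Icc] at hfS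
    simp only [hU, Finset.mem_product, Finset.mem_Icc]
    exact ⟨⟨Int.ediv_nonneg hfS.1.1 (by omega), Int.ediv_le_ediv hD hfS.1.2⟩,
      ⟨Int.ediv_nonneg hfS.2.1 (by omega), Int.ediv_le_ediv hD hfS.2.2⟩⟩
  have hcard := Finset.card_le_card_of_injOn _ hmaps hinj
  have hTcard : T.card = (a+1).toNat * (b+1).toNat := by
    simp [hT, Int.card_Icc]
  have hUcard : U.card = (M+1).toNat * (M+1).toNat := by
    simp [hU, Int.card_Icc]
  rw [hTcard, hUcard] at hcard
  have key : (a+1) * (b+1) ≤ (M+1) * (M+1) := by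
    have h := (Nat.cast_le (α := ℤ)).mpr hcard
    push_cast [Int.toNat_of_nonneg (show (0:ℤ) ≤ a + 1 by omega),
      Int.toNat_of_nonneg (show (0:ℤ) ≤ b + 1 by omega),
      Int.toNat_of_nonneg (show (0:ℤ) ≤ M + 1 by omega)] at h
    exact h
  have hMe := Int.mul_ediv_add_emod (n-1) (b+1)
  have hr1 := Int.emod_nonneg (n-1) (show b+1 ≠ 0 by omega)
  have hr2 := Int.emod_lt_of_pos (n-1) hD
  rw [← hM] at hMe
  rcases (show a = b ∨ a = b + 1 by omega) with hc | hc
  · -- perfect square case: n - 1 = b ^ 2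
    have hnb : n - 1 = b ^ 2 := by rw [hc] at ha2; omega
    have hMb : M ≤ b - 1 := by
      by_contra hMb
      push_neg at hMb
      have : (b + 1) * b ≤ (b + 1) * M := by
        apply mul_le_mul_of_nonneg_left (by omega) (by omega)
      rw [pow_two] at hnb
      linarith [this, hMe, hr1]
    have hsq2 : (M + 1) * (M + 1) ≤ b * b :=
      mul_le_mul (by omega) (by omega) (by omega) (by omega)
    nlinarith [key, hsq2, hc]
  · have hMb : M ≤ b := by
      by_contra hMb
      push_neg at hMb
      have : (b + 1) * (b + 1) ≤ (b + 1) * M := by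
        apply mul_le_mul_of_nonneg_left (by omega) (by omega)
      rw [pow_two] at hbn
      linarith [this, hMe, hr1, hbn]
    have hsq2 : (M + 1) * (M + 1) ≤ (b + 1) * (b + 1) :=
      mul_le_mul (by omega) (by omega) (by omega) (by omega)
    nlinarith [key, hsq2, hc]
end

section
/- Fix integers d ≥ 2 and n ≥ 2. There exists a bijection f of the grid {0,…,n−1}^d to itself such that for all distinct points p, q, the L∞ distance between p and q plus the L∞ distance between f(p) and f(q) is at least 2⌊√(n/3)⌋. Moreover, for every bijection g of {0,…,n−1}^d to itself, there exist distinct p, q with combined L∞ distance at most ⌈√(n−1)⌉ + ⌊√(n−1)⌋. -/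
/-!
Lower bound. Distinct points differ in some coordinate, so it suffices to find one permutation σ
of `{0, …, n - 1}` with `|x - y| + |σ x - σ y| ≥ 2k` for `x ≠ y`, where `k = ⌊√(n / 3)⌋`, and to
apply it in every coordinate. Write `0, …, n - 1` row by row into an array with `k + 2` columns
and read it off column by column, each column listing its even rows before its odd rows. Points
that are close in the array and lie in the same or in neighbouring columns are sent about half a
column, `≈ n / (2(k + 2)) ≥ k - 1/2`, apart; points in columns at least two apart are separated
by a whole column, of height `≥ n / (k + 2) ≥ 2k - 1` because `3k² ≤ n`.

Upper bound. With `a = ⌈√(n - 1)⌉` and `b = ⌊√(n - 1)⌋` we have `a < n ≤ a (b + 1)`. The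
`(a + 1)^d` points of the cube `{0, …, a}^d` are sent by `g` into the `a^d` boxes
`∏ [(b + 1) tᵢ, (b + 1)(tᵢ + 1))`, so two of them share a box: they are at distance at most `a`
and their images at distance at most `b`.
-/

namespace GridSpread

open Set

def evenThenOdd (h i : ℕ) : ℕ := if i % 2 = 0 then i / 2 else (h + 1) / 2 + i / 2

lemma evenThenOdd_lt {h i : ℕ} (hi : i < h) : evenThenOdd h i < h := by
  unfold evenThenOdd; split_ifs <;> omega

lemma evenThenOdd_injOn (h : ℕ) : InjOn (evenThenOdd h) (Iio h) := by
  intro i hi i' hi' he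
  simp only [mem_Iio, evenThenOdd] at hi hi' he
  split_ifs at he <;> omega

def colHeight (n m j : ℕ) : ℕ := n / m + if j < n % m then 1 else 0

def colStart (n m j : ℕ) : ℕ := j * (n / m) + min j (n % m)

section Columns

variable {n m : ℕ}

lemma colHeight_mem (j : ℕ) : n / m ≤ colHeight n m j ∧ colHeight n m j ≤ n / m + 1 := by
  unfold colHeight; split_ifs <;> omega

lemma colHeight_antitone : Antitone (colHeight n m) := by
  intro j j' h; unfold colHeight; split_ifs <;> omega

lemma colStart_succ (j : ℕ) : colStart n m (j + 1) = colStart n m j + colHeight n m j := by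
  unfold colStart colHeight
  split_ifs <;> simp only [add_mul, one_mul] <;> omega

lemma colStart_mono : Monotone (colStart n m) :=
  monotone_nat_of_le_succ fun j => by rw [colStart_succ]; omega

lemma colStart_self (hm : 0 < m) : colStart n m m = n := by
  rw [colStart, min_eq_right (Nat.mod_lt n hm).le, Nat.div_add_mod]

def columnPerm (n m x : ℕ) : ℕ :=
  colStart n m (x % m) + evenThenOdd (colHeight n m (x % m)) (x / m)

lemma columnPerm_mul_add {i j : ℕ} (hj : j < m) :
    columnPerm n m (m * i + j) = colStart n m j + evenThenOdd (colHeight n m j) i := by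
  have hm : 0 < m := by omega
  rw [columnPerm, Nat.mul_add_mod, Nat.mod_eq_of_lt hj, Nat.mul_add_div hm, Nat.div_eq_of_lt hj,
    add_zero]

lemma lt_colHeight {i j : ℕ} (hj : j < m) (hx : m * i + j < n) : i < colHeight n m j := by
  by_contra! hle
  have hmul := Nat.mul_le_mul_left m hle
  have := Nat.div_add_mod n m
  have := Nat.mod_lt n (show 0 < m by omega)
  unfold colHeight at hmul
  split_ifs at hmul <;> simp only [mul_add, mul_one, mul_zero] at hmul <;> omega

lemma columnPerm_mem_Ico {i j : ℕ} (hj : j < m) (hx : m * i + j < n) :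
    columnPerm n m (m * i + j) ∈ Ico (colStart n m j) (colStart n m (j + 1)) := by
  rw [columnPerm_mul_add hj, colStart_succ, mem_Ico]
  have := evenThenOdd_lt (lt_colHeight hj hx)
  omega

lemma exists_mul_add (hm : 0 < m) (x : ℕ) : ∃ i j, j < m ∧ m * i + j = x :=
  ⟨x / m, x % m, Nat.mod_lt x hm, Nat.div_add_mod x m⟩

lemma columnPerm_injOn (hm : 0 < m) : InjOn (columnPerm n m) (Iio n) := by
  intro x hx y hy hxy
  obtain ⟨i, j, hj, rfl⟩ := exists_mul_add hm x
  obtain ⟨i', j', hj', rfl⟩ := exists_mul_add hm y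
  have hcol : j = j' := by
    have h := columnPerm_mem_Ico hj hx
    have h' := columnPerm_mem_Ico hj' hy
    rw [hxy] at h
    simp only [mem_Ico] at h h'
    by_contra hne
    rcases Nat.lt_or_gt_of_ne hne with hlt | hlt
    · have := colStart_mono (n := n) (m := m) (show j + 1 ≤ j' by omega)
      omega
    · have := colStart_mono (n := n) (m := m) (show j' + 1 ≤ j by omega)
      omega
  subst hcol
  rw [columnPerm_mul_add hj, columnPerm_mul_add hj, add_right_inj] at hxy
  rw [evenThenOdd_injOn _ (lt_colHeight hj hx) (lt_colHeight hj hy) hxy]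

lemma columnPerm_bijOn (hm : 0 < m) : BijOn (columnPerm n m) (Iio n) (Iio n) := by
  refine (finite_Iio n).injOn_iff_bijOn_of_mapsTo ?_ |>.mp (columnPerm_injOn hm)
  intro x hx
  obtain ⟨i, j, hj, rfl⟩ := exists_mul_add hm x
  have hend : colStart n m (j + 1) ≤ n := (colStart_mono hj).trans_eq (colStart_self hm)
  exact (columnPerm_mem_Ico hj hx).2.trans_le hend

lemma evenThenOdd_add_lt_colStart {i j j' : ℕ} (hjj : j + 2 ≤ j') (hi : i < colHeight n m j) :
    colStart n m j + evenThenOdd (colHeight n m j) i + n / m < colStart n m j' := by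
  have hmono := colStart_mono (n := n) (m := m) hjj
  have := (colHeight_mem (n := n) (m := m) (j + 1)).1
  have := evenThenOdd_lt hi
  rw [colStart_succ, colStart_succ] at hmono
  omega

lemma columnPerm_spread_next_row {k i j j' : ℕ} (hk : 2 * k ≤ n / (k + 2) + 1)
    (hnear : j ≤ j' + 1 ∧ j' ≤ j + 1) (hij : (k + 2) * i + j < (k + 2) * (i + 1) + j') :
    2 * k ≤ (k + 2) * (i + 1) + j' - ((k + 2) * i + j) +
      ((colStart n (k + 2) j' + evenThenOdd (colHeight n (k + 2) j') (i + 1) : ℕ) -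
        (colStart n (k + 2) j + evenThenOdd (colHeight n (k + 2) j) i : ℤ)).natAbs := by
  have hH := colHeight_mem (n := n) (m := k + 2) j
  have hH' := colHeight_mem (n := n) (m := k + 2) j'
  rw [mul_add, mul_one] at hij ⊢
  obtain rfl | rfl | rfl : j' = j ∨ j' = j + 1 ∨ j = j' + 1 := by omega
  · unfold evenThenOdd
    split_ifs <;> omega
  · have := colHeight_antitone (n := n) (m := k + 2) (Nat.le_add_right j 1)
    rw [colStart_succ]
    unfold evenThenOdd
    split_ifs <;> omega
  · have := colHeight_antitone (n := n) (m := k + 2) (Nat.le_add_right j' 1)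
    rw [colStart_succ]
    unfold evenThenOdd
    split_ifs <;> omega

lemma columnPerm_spread {k x y : ℕ} (hk : 2 * k ≤ n / (k + 2) + 1) (hxy : x < y) (hy : y < n) :
    2 * k ≤ y - x + ((columnPerm n (k + 2) y : ℤ) - columnPerm n (k + 2) x).natAbs := by
  obtain ⟨i, j, hj, rfl⟩ := exists_mul_add (m := k + 2) (by omega) x
  obtain ⟨i', j', hj', rfl⟩ := exists_mul_add (m := k + 2) (by omega) y
  have hi := lt_colHeight hj (hxy.trans hy)
  have hi' := lt_colHeight hj' hy
  rw [columnPerm_mul_add hj, columnPerm_mul_add hj']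
  obtain hfar | hfar | hnear : j + 2 ≤ j' ∨ j' + 2 ≤ j ∨ (j ≤ j' + 1 ∧ j' ≤ j + 1) := by omega
  · have := evenThenOdd_add_lt_colStart hfar hi
    omega
  · have := evenThenOdd_add_lt_colStart hfar hi'
    omega
  have hrow : i ≤ i' := by
    by_contra! h
    have := Nat.mul_le_mul_left (k + 2) (show i' + 1 ≤ i from h)
    rw [mul_add] at this
    omega
  by_cases hfarRow : i + 2 ≤ i'
  · have := Nat.mul_le_mul_left (k + 2) hfarRow
    rw [mul_add] at this
    omega
  obtain rfl | rfl : i' = i ∨ i' = i + 1 := by omega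
  · obtain rfl : j' = j + 1 := by omega
    have := colHeight_mem (n := n) (m := k + 2) j
    have := colHeight_mem (n := n) (m := k + 2) (j + 1)
    have := colHeight_antitone (n := n) (m := k + 2) (Nat.le_add_right j 1)
    rw [colStart_succ]
    unfold evenThenOdd
    split_ifs <;> omega
  · exact columnPerm_spread_next_row hk hnear hxy

end Columns

def linftyDist {ι : Type*} [Fintype ι] (p q : ι → ℤ) : ℕ :=
  Finset.univ.sup fun i => (q i - p i).natAbs

lemma natAbs_le_linftyDist {ι : Type*} [Fintype ι] (p q : ι → ℤ) (i : ι) :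
    (q i - p i).natAbs ≤ linftyDist p q :=
  Finset.le_sup (f := fun i => (q i - p i).natAbs) (Finset.mem_univ i)

lemma bijOn_comp_left {ι α : Type*} {σ : α → α} {s : Set α} (h : BijOn σ s s) :
    BijOn (σ ∘ ·) {p : ι → α | ∀ i, p i ∈ s} {p | ∀ i, p i ∈ s} := by
  refine ⟨fun p hp i => h.mapsTo (hp i), fun p hp q hq hpq => ?_, fun q hq => ?_⟩
  · exact funext fun i => h.injOn (hp i) (hq i) (congrFun hpq i)
  · choose p hp hpq using fun i => h.surjOn (hq i)
    exact ⟨p, hp, funext hpq⟩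

lemma le_linftyDist_add_linftyDist {ι : Type*} [Fintype ι] {σ : ℤ → ℤ} {s : Set ℤ} {c : ℕ}
    (hσ : ∀ x ∈ s, ∀ y ∈ s, x ≠ y → c ≤ (y - x).natAbs + (σ y - σ x).natAbs)
    {p q : ι → ℤ} (hp : ∀ i, p i ∈ s) (hq : ∀ i, q i ∈ s) (hpq : p ≠ q) :
    c ≤ linftyDist p q + linftyDist (σ ∘ p) (σ ∘ q) := by
  obtain ⟨i, hi⟩ := Function.ne_iff.mp hpq
  have := natAbs_le_linftyDist p q i
  have : (σ (q i) - σ (p i)).natAbs ≤ linftyDist (σ ∘ p) (σ ∘ q) :=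
    natAbs_le_linftyDist (σ ∘ p) (σ ∘ q) i
  have := hσ _ (hp i) _ (hq i) hi
  omega

lemma bijOn_Icc_natCast_comp_toNat {n : ℕ} {σ : ℕ → ℕ} (h : BijOn σ (Iio n) (Iio n)) :
    BijOn (fun z : ℤ => (σ z.toNat : ℤ)) (Icc 0 ((n : ℤ) - 1)) (Icc 0 ((n : ℤ) - 1)) := by
  have hmaps :
      MapsTo (fun z : ℤ => (σ z.toNat : ℤ)) (Icc 0 ((n : ℤ) - 1)) (Icc 0 ((n : ℤ) - 1)) := by
    intro z hz
    have : σ z.toNat < n := h.mapsTo (show z.toNat < n by simp only [mem_Icc] at hz; omega)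
    simp only [mem_Icc]; omega
  refine (finite_Icc _ _).injOn_iff_bijOn_of_mapsTo hmaps |>.mp fun x hx y hy hxy => ?_
  simp only [mem_Icc] at hx hy
  have := h.injOn (show x.toNat < n by omega) (show y.toNat < n by omega) (Nat.cast_inj.mp hxy)
  omega

lemma spread_natCast_comp_toNat {n c : ℕ} {σ : ℕ → ℕ}
    (h : ∀ x y, x < y → y < n → c ≤ y - x + ((σ y : ℤ) - σ x).natAbs) :
    ∀ x ∈ Icc 0 ((n : ℤ) - 1), ∀ y ∈ Icc 0 ((n : ℤ) - 1), x ≠ y →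
      c ≤ (y - x).natAbs + ((σ y.toNat : ℤ) - σ x.toNat).natAbs := by
  intro x hx y hy hxy
  simp only [mem_Icc] at hx hy
  rcases lt_or_gt_of_ne hxy with hlt | hlt
  · have := h x.toNat y.toNat (by omega) (by omega)
    omega
  · have := h y.toNat x.toNat (by omega) (by omega)
    omega

lemma two_mul_le_div_add_one {n k : ℕ} (h : 3 * k ^ 2 ≤ n) : 2 * k ≤ n / (k + 2) + 1 := by
  obtain _ | l := k
  · simp
  have : (2 * l + 1) * (l + 1 + 2) ≤ n := by nlinarith [Nat.le_mul_self l]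
  have := (Nat.le_div_iff_mul_le (by omega)).mpr this
  omega

lemma exists_bijOn_Icc_spread (n : ℕ) :
    ∃ σ : ℤ → ℤ, BijOn σ (Icc 0 ((n : ℤ) - 1)) (Icc 0 ((n : ℤ) - 1)) ∧
      ∀ x ∈ Icc 0 ((n : ℤ) - 1), ∀ y ∈ Icc 0 ((n : ℤ) - 1), x ≠ y →
        2 * Nat.sqrt (n / 3) ≤ (y - x).natAbs + (σ y - σ x).natAbs := by
  have hk : 3 * Nat.sqrt (n / 3) ^ 2 ≤ n := by
    have := Nat.sqrt_le' (n / 3)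
    omega
  exact ⟨_, bijOn_Icc_natCast_comp_toNat (columnPerm_bijOn (by omega)),
    spread_natCast_comp_toNat fun x y => columnPerm_spread (two_mul_le_div_add_one hk)⟩

lemma _root_.Real.floor_sqrt_eq_nat_sqrt_floor {x : ℝ} (hx : 0 ≤ x) :
    ⌊√x⌋ = Nat.sqrt ⌊x⌋₊ := by
  rw [Int.floor_eq_iff]
  constructor
  · rw [Int.cast_natCast, Real.le_sqrt (Nat.cast_nonneg _) hx]
    calc ((Nat.sqrt ⌊x⌋₊ : ℕ) : ℝ) ^ 2 ≤ ⌊x⌋₊ := mod_cast Nat.sqrt_le' _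
      _ ≤ x := Nat.floor_le hx
  · rw [Int.cast_natCast, Real.sqrt_lt' (by positivity)]
    calc x < ⌊x⌋₊ + 1 := Nat.lt_floor_add_one x
      _ ≤ ((Nat.sqrt ⌊x⌋₊ + 1 : ℕ) : ℝ) ^ 2 := mod_cast Nat.lt_succ_sqrt' _
      _ = _ := by push_cast; ring

lemma floor_sqrt_div_three (n : ℕ) : ⌊√((n : ℝ) / 3)⌋ = Nat.sqrt (n / 3) := by
  rw [Real.floor_sqrt_eq_nat_sqrt_floor (by positivity), ← Nat.cast_ofNat, Nat.floor_div_eq_div]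

lemma natAbs_sub_le_of_ediv_eq {u v : ℤ} {b : ℕ} (h : u / (b + 1) = v / (b + 1)) :
    (v - u).natAbs ≤ b := by
  have hu := Int.emod_add_mul_ediv u (b + 1)
  have hv := Int.emod_add_mul_ediv v (b + 1)
  have := Int.emod_nonneg u (b := b + 1) (by positivity)
  have := Int.emod_nonneg v (b := b + 1) (by positivity)
  have := Int.emod_lt_of_pos u (b := b + 1) (by positivity)
  have := Int.emod_lt_of_pos v (b := b + 1) (by positivity)
  rw [h] at hu
  omega

lemma exists_ne_linftyDist_le {ι : Type*} [Fintype ι] [DecidableEq ι] [Nonempty ι] {n a b : ℕ}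
    {g : (ι → ℤ) → (ι → ℤ)}
    (hg : MapsTo g {p | ∀ i, p i ∈ Icc 0 ((n : ℤ) - 1)} {p | ∀ i, p i ∈ Icc 0 ((n : ℤ) - 1)})
    (ha : a < n) (hab : n ≤ a * (b + 1)) :
    ∃ p ∈ {p : ι → ℤ | ∀ i, p i ∈ Icc 0 ((n : ℤ) - 1)},
      ∃ q ∈ {p : ι → ℤ | ∀ i, p i ∈ Icc 0 ((n : ℤ) - 1)},
        p ≠ q ∧ linftyDist p q ≤ a ∧ linftyDist (g p) (g q) ≤ b := by
  set cube := Fintype.piFinset fun _ : ι => Finset.Icc (0 : ℤ) a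
  set boxes := Fintype.piFinset fun _ : ι => Finset.Ico (0 : ℤ) a
  have hcard : boxes.card < cube.card := by
    simp only [boxes, cube, Fintype.card_piFinset, Int.card_Icc, Int.card_Ico, Finset.prod_const]
    exact Nat.pow_lt_pow_left (by omega) Fintype.card_ne_zero
  have hcube : ∀ p ∈ cube, ∀ i, p i ∈ Icc 0 ((n : ℤ) - 1) := by
    intro p hp i
    have := Finset.mem_Icc.mp (Fintype.mem_piFinset.mp hp i)
    simp only [mem_Icc]; omega
  have hbox : ∀ p ∈ cube, (fun i => g p i / (b + 1)) ∈ boxes := by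
    intro p hp
    refine Fintype.mem_piFinset.mpr fun i => Finset.mem_Ico.mpr ⟨?_, ?_⟩
    · exact Int.ediv_nonneg (hg (hcube p hp) i).1 (by positivity)
    · rw [Int.ediv_lt_iff_lt_mul (by positivity)]
      have := (hg (hcube p hp) i).2
      have : (n : ℤ) ≤ a * (b + 1) := mod_cast hab
      omega
  obtain ⟨p, hp, q, hq, hpq, hpqbox⟩ := Finset.exists_ne_map_eq_of_card_lt_of_maps_to hcard hbox
  refine ⟨p, hcube p hp, q, hcube q hq, hpq, Finset.sup_le fun i _ => ?_,
    Finset.sup_le fun i _ => ?_⟩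
  · have := Finset.mem_Icc.mp (Fintype.mem_piFinset.mp hp i)
    have := Finset.mem_Icc.mp (Fintype.mem_piFinset.mp hq i)
    omega
  · exact natAbs_sub_le_of_ediv_eq (congrFun hpqbox i)

lemma lt_natCeil_sqrt_mul_natFloor_sqrt_add_one {x : ℝ} (hx : 0 < x) :
    x < ⌈√x⌉₊ * (⌊√x⌋₊ + 1) := by
  have hs : 0 < √x := Real.sqrt_pos.mpr hx
  calc x = √x * √x := (Real.mul_self_sqrt hx.le).symm
    _ < ⌈√x⌉₊ * (⌊√x⌋₊ + 1) :=
      mul_lt_mul' (Nat.le_ceil _) (Nat.lt_floor_add_one _) hs.le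
        (Nat.cast_pos.mpr (Nat.ceil_pos.mpr hs))

lemma natCeil_sqrt_sub_one_lt {n : ℕ} (hn : 2 ≤ n) : ⌈√((n : ℝ) - 1)⌉₊ < n := by
  have h1 : (1 : ℝ) ≤ n - 1 := by
    have : (2 : ℝ) ≤ n := mod_cast hn
    linarith
  have : √((n : ℝ) - 1) ≤ ((n - 1 : ℕ) : ℝ) := by
    rw [Nat.cast_sub (by omega), Nat.cast_one]
    exact Real.sqrt_le_self_iff.mpr (Or.inr h1)
  have := Nat.ceil_le.mpr this
  omega

lemma le_natCeil_sqrt_sub_one_mul {n : ℕ} (hn : 2 ≤ n) :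
    n ≤ ⌈√((n : ℝ) - 1)⌉₊ * (⌊√((n : ℝ) - 1)⌋₊ + 1) := by
  have hpos : (0 : ℝ) < n - 1 := by
    have : (2 : ℝ) ≤ n := mod_cast hn
    linarith
  have := lt_natCeil_sqrt_mul_natFloor_sqrt_add_one hpos
  have : (n : ℝ) < ((⌈√((n : ℝ) - 1)⌉₊ * (⌊√((n : ℝ) - 1)⌋₊ + 1) + 1 : ℕ) : ℝ) := by
    push_cast; linarith
  exact Nat.lt_succ_iff.mp (mod_cast this)

end GridSpread

open GridSpread

theorem stmt_17 (d n : ℕ) (hd : 2 ≤ d) (hn : 2 ≤ n) :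
    (∃ f : (Fin d → ℤ) → (Fin d → ℤ),
      Set.BijOn f {p | ∀ i, 0 ≤ p i ∧ p i ≤ (n : ℤ) - 1}
        {p | ∀ i, 0 ≤ p i ∧ p i ≤ (n : ℤ) - 1} ∧
      ∀ p ∈ {p : Fin d → ℤ | ∀ i, 0 ≤ p i ∧ p i ≤ (n : ℤ) - 1},
        ∀ q ∈ {p : Fin d → ℤ | ∀ i, 0 ≤ p i ∧ p i ≤ (n : ℤ) - 1}, p ≠ q →
          2 * ⌊Real.sqrt ((n : ℝ) / 3)⌋ ≤
            ((Finset.univ.sup fun i => (q i - p i).natAbs : ℕ) : ℤ) +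
              ((Finset.univ.sup fun i => (f q i - f p i).natAbs : ℕ) : ℤ)) ∧
    (∀ g : (Fin d → ℤ) → (Fin d → ℤ),
      Set.BijOn g {p | ∀ i, 0 ≤ p i ∧ p i ≤ (n : ℤ) - 1}
        {p | ∀ i, 0 ≤ p i ∧ p i ≤ (n : ℤ) - 1} →
      ∃ p ∈ {p : Fin d → ℤ | ∀ i, 0 ≤ p i ∧ p i ≤ (n : ℤ) - 1},
        ∃ q ∈ {p : Fin d → ℤ | ∀ i, 0 ≤ p i ∧ p i ≤ (n : ℤ) - 1}, p ≠ q ∧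
          ((Finset.univ.sup fun i => (q i - p i).natAbs : ℕ) : ℤ) +
              ((Finset.univ.sup fun i => (g q i - g p i).natAbs : ℕ) : ℤ) ≤
            ⌈Real.sqrt ((n : ℝ) - 1)⌉ + ⌊Real.sqrt ((n : ℝ) - 1)⌋) := by
  refine ⟨?_, fun g hg => ?_⟩
  · obtain ⟨σ, hσ, hspread⟩ := exists_bijOn_Icc_spread n
    refine ⟨(σ ∘ ·), bijOn_comp_left hσ, fun p hp q hq hpq => ?_⟩
    rw [floor_sqrt_div_three]
    exact_mod_cast le_linftyDist_add_linftyDist hspread hp hq hpq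
  · have : Nonempty (Fin d) := ⟨⟨0, by omega⟩⟩
    obtain ⟨p, hp, q, hq, hpq, hdist, hgdist⟩ := exists_ne_linftyDist_le hg.mapsTo
      (natCeil_sqrt_sub_one_lt hn) (le_natCeil_sqrt_sub_one_mul hn)
    refine ⟨p, hp, q, hq, hpq, ?_⟩
    rw [← Int.natCast_ceil_eq_ceil (Real.sqrt_nonneg _),
      ← Int.natCast_floor_eq_floor (Real.sqrt_nonneg _)]
    exact_mod_cast add_le_add hdist hgdist
end
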